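/- arXiv:2010.00147 — 2 statements merged into one kernel-verified Lean document; each statement's English description precedes it below -/
import Mathlib

section
/- For every partition λ, the power sum symmetric functions expand into the chromatic basis generated by the family of stars via p_λ = Σ_{α ⊆ λ} (−1)^{|α|−ℓ(λ)} C(λ_1−1, α_1−1)⋯C(λ_{ℓ(λ)}−1, α_{ℓ(λ)}−1) X_{S_{α̃·(1^{|λ|−|α|})}}, and conversely X_{S_λ} = Σ_{α ⊆ λ} (−1)^{|α|−ℓ(λ)} C(λ_1−1, α_1−1)⋯C(λ_{ℓ(λ)}−1, α_{ℓ(λ)}−1) p_{α̃·(1^{|λ|−|α|})}, where α ⊆ λ means ℓ(α) = ℓ(λ) and α_i ≤ λ_i for all i, and C(n,k) denotes the binomial coefficient. -/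
open scoped BigOperators
open scoped Classical

namespace CSF

/-! ## Extended chromatic symmetric functions of multigraphs

A (multi)graph on a vertex type `V` is given by a multiset of edges `E : Multiset (Sym2 V)`
(loops and multiple edges allowed).  Colours are positive integers `ℕ+`, and the
(extended) chromatic symmetric function lives in `MvPowerSeries ℕ+ ℚ`, the power series
in the commuting variables `x_j`, `j : ℕ+`. -/

/-- A proper colouring of the multigraph with edge multiset `E`. -/
def Proper {V C : Type*} (E : Multiset (Sym2 V)) (κ : V → C) : Prop :=
  ∀ u v : V, s(u, v) ∈ E → κ u ≠ κ v

/-- The monomial `∏_v x_{κ(v)}^{w(v)}`, recorded as its exponent vector. -/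
noncomputable def mon {V : Type*} [Fintype V] (w : V → ℕ) (κ : V → ℕ+) : ℕ+ →₀ ℕ :=
  ∑ v, Finsupp.single (κ v) (w v)

/-- The extended chromatic symmetric function `X_{(G,w)}` of the weighted graph with
edge multiset `E` and vertex weights `w`: the coefficient of a monomial `m` is the number
of proper colourings `κ` with `∏_v x_{κ(v)}^{w(v)} = x^m`. -/
noncomputable def X {V : Type*} [Fintype V] (E : Multiset (Sym2 V)) (w : V → ℕ) :
    MvPowerSeries ℕ+ ℚ :=
  fun m => (Nat.card {κ : V → ℕ+ // Proper E κ ∧ mon w κ = m} : ℚ)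

/-- The chromatic polynomial `χ_G(k)`: the number of proper colourings with `k` colours. -/
noncomputable def chrom {V : Type*} [Fintype V] (E : Multiset (Sym2 V)) (k : ℕ) : ℕ :=
  Nat.card {κ : V → Fin k // Proper E κ}

/-- Edge multiset of the labelled path `P_n` on `Fin n`: edges `v_i v_{i+1}`. -/
def pathE (n : ℕ) : Multiset (Sym2 (Fin n)) :=
  ((Finset.univ : Finset (Fin n × Fin n)).filter
    (fun p => (p.1 : ℕ) + 1 = (p.2 : ℕ))).val.map (fun p => s(p.1, p.2))

/-- Edge multiset of the labelled star `S_n` on `Fin n`: edges `v_i v_n`, `i ∈ [n-1]`. -/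
def starE (n : ℕ) : Multiset (Sym2 (Fin n)) :=
  ((Finset.univ : Finset (Fin n × Fin n)).filter
    (fun p => (p.1 : ℕ) + 1 < n ∧ (p.2 : ℕ) + 1 = n)).val.map (fun p => s(p.1, p.2))

/-- Edge multiset of a disjoint union of graphs on `Fin (m i)`, `i : Fin k`. -/
noncomputable def unionE {k : ℕ} {m : Fin k → ℕ}
    (Es : ∀ i, Multiset (Sym2 (Fin (m i)))) : Multiset (Sym2 (Σ i, Fin (m i))) :=
  ∑ i, (Es i).map (Sym2.map (fun v => ⟨i, v⟩))

/-- Extended chromatic symmetric function of a disjoint union of weighted graphs. -/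
noncomputable def Xunion {k : ℕ} {m : Fin k → ℕ}
    (Es : ∀ i, Multiset (Sym2 (Fin (m i)))) (ws : ∀ i, Fin (m i) → ℕ) :
    MvPowerSeries ℕ+ ℚ :=
  X (unionE Es) (fun v => ws v.1 v.2)

/-- `X_{P_l}`: chromatic symmetric function of the disjoint union of unweighted paths
`P_{l_1} ∪ ⋯ ∪ P_{l_k}`. -/
noncomputable def XPaths (l : List ℕ) : MvPowerSeries ℕ+ ℚ :=
  Xunion (m := fun i : Fin l.length => l.get i) (fun i => pathE (l.get i)) (fun _ _ => 1)

/-- `X_{S_l}`: chromatic symmetric function of a disjoint union of unweighted stars. -/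
noncomputable def XStars (l : List ℕ) : MvPowerSeries ℕ+ ℚ :=
  Xunion (m := fun i : Fin l.length => l.get i) (fun i => starE (l.get i)) (fun _ _ => 1)

/-- `X_{(P_{ℓ(α)}, α)}`: the extended chromatic symmetric function of the path on
`ℓ(α)` vertices whose `i`-th vertex has weight `α_i`. -/
noncomputable def Xwpath (α : List ℕ) : MvPowerSeries ℕ+ ℚ :=
  X (pathE α.length) (fun i => α.get i)

/-! ## Symmetric functions -/

/-- The power sum symmetric function `p_i = ∑_j x_j^i`. -/
noncomputable def pS (i : ℕ) : MvPowerSeries ℕ+ ℚ :=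
  fun m => if ∃ j : ℕ+, m = Finsupp.single j i then 1 else 0

/-- The complete homogeneous symmetric function `h_i`. -/
noncomputable def hS (i : ℕ) : MvPowerSeries ℕ+ ℚ :=
  fun m => if (m.sum fun _ k => k) = i then 1 else 0

/-- The elementary symmetric function `e_i`. -/
noncomputable def eS (i : ℕ) : MvPowerSeries ℕ+ ℚ :=
  fun m => if ((m.sum fun _ k => k) = i ∧ ∀ j, m j ≤ 1) then 1 else 0

/-- `p_λ = p_{λ_1} ⋯ p_{λ_k}`. -/
noncomputable def pProd (l : List ℕ) : MvPowerSeries ℕ+ ℚ := (l.map pS).prod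
/-- `h_λ = h_{λ_1} ⋯ h_{λ_k}`. -/
noncomputable def hProd (l : List ℕ) : MvPowerSeries ℕ+ ℚ := (l.map hS).prod
/-- `e_λ = e_{λ_1} ⋯ e_{λ_k}`. -/
noncomputable def eProd (l : List ℕ) : MvPowerSeries ℕ+ ℚ := (l.map eS).prod

/-- The algebra `Sym` of symmetric functions, realized as the subalgebra of
`MvPowerSeries ℕ+ ℚ` generated by the elementary symmetric functions. -/
noncomputable def SymAlg : Subalgebra ℚ (MvPowerSeries ℕ+ ℚ) :=
  Algebra.adjoin ℚ {f | ∃ i : ℕ, f = eS (i + 1)}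

/-- Sort a list into weakly decreasing order (the underlying partition `α̃`). -/
def sortDesc (l : List ℕ) : List ℕ := List.insertionSort (· ≥ ·) l

/-- Partitions: weakly decreasing lists of positive integers. -/
abbrev PartL : Type := {l : List ℕ // l.Pairwise (· ≥ ·) ∧ ∀ x ∈ l, 0 < x}

/-! ## Compositions -/

/-- All coarsenings of a composition: lists obtained by summing adjacent blocks. -/
def coarsenings : List ℕ → List (List ℕ)
  | [] => [[]]
  | a :: l =>
    (coarsenings l).map (fun β => a :: β) ++
      (coarsenings l).filterMap (fun β =>
        match β with
        | [] => none
        | b :: β' => some ((a + b) :: β'))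

/-- The ribbon Schur function `r_α = ∑_{β ≽ α} (-1)^{ℓ(α) - ℓ(β)} h_{β̃}`. -/
noncomputable def ribbon (α : List ℕ) : MvPowerSeries ℕ+ ℚ :=
  ((coarsenings α).map fun β =>
    ((-1 : ℚ) ^ (α.length - β.length)) • hProd (sortDesc β)).sum

lemma sum_take_get_le (α : List ℕ) (b : Fin α.length) :
    (α.take b).sum + α.get b ≤ α.sum := by
  have h1 : (α.take (b + 1)).sum = (α.take b).sum + α[b] := List.sum_take_succ α b b.isLt
  have h2 : (α.take (b + 1)).sum ≤ α.sum := by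
    conv_rhs => rw [← List.take_append_drop (b + 1) α]
    rw [List.sum_append]
    exact Nat.le_add_right _ _
  simpa [List.get_eq_getElem, ← h1] using h2

/-- Shift a graph on `Fin m` by an offset `o` inside `Fin n`. -/
def shiftE {m n : ℕ} (o : ℕ) (h : o + m ≤ n) (E : Multiset (Sym2 (Fin m))) :
    Multiset (Sym2 (Fin n)) :=
  E.map (Sym2.map (fun v : Fin m => (⟨o + (v : ℕ), by have := v.isLt; omega⟩ : Fin n)))

/-- The labelled graph `G_{α_1} | G_{α_2} | ⋯ | G_{α_k}` on `Fin (α₁ + ⋯ + α_k)`: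
consecutive blocks of vertices carry the graphs `Gr (α_i)`. -/
noncomputable def concatE (α : List ℕ) (Gr : (k : ℕ) → Multiset (Sym2 (Fin k))) :
    Multiset (Sym2 (Fin α.sum)) :=
  ∑ b : Fin α.length,
    shiftE ((α.take b).sum) (sum_take_get_le α b) (Gr (α.get b))

/-- `set(α) = {α_1, α_1+α_2, …, α_1+⋯+α_{ℓ(α)-1}} ⊆ [n-1]`. -/
def setC (α : List ℕ) : Finset ℕ :=
  ((List.range (α.length - 1)).map (fun j => (α.take (j + 1)).sum)).toFinset

/-- The labelled graph on `Fin n` whose edges are `v_i v_{i+1}` for `i ∈ S` (1-based). -/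
def edgesFromSet (n : ℕ) (S : Finset ℕ) : Multiset (Sym2 (Fin n)) :=
  ((Finset.univ : Finset (Fin n × Fin n)).filter
    (fun p => (p.1 : ℕ) + 1 = (p.2 : ℕ) ∧ (p.2 : ℕ) ∈ S)).val.map (fun p => s(p.1, p.2))

/-- `γ = α^c`, the complement composition: the composition of `|α|` with
`set(γ) = [n-1] − set(α)`. -/
def IsComplementOf (γ α : List ℕ) : Prop :=
  (∀ x ∈ γ, 0 < x) ∧ γ.sum = α.sum ∧ setC γ = Finset.Ioo 0 α.sum \ setC α

/-- Near concatenation `α ⊙ β` of compositions. -/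
def nconcat : List ℕ → List ℕ → List ℕ
  | [], β => β
  | [a], [] => [a]
  | [a], b :: β => (a + b) :: β
  | a :: l, β => a :: nconcat l β

/-- `β^{⊙ i}`, the `i`-fold near concatenation of `β` with itself. -/
def npowOdot (β : List ℕ) : ℕ → List ℕ
  | 0 => []
  | i + 1 => nconcat (npowOdot β i) β

/-- Composition of compositions: `α ∘ β = β^{⊙α_1} · ⋯ · β^{⊙α_{ℓ(α)}}`. -/
def compOp (α β : List ℕ) : List ℕ := (α.map (npowOdot β)).flatten

/-- The equivalence `α ∼ β`: `α` and `β` have `∘`-factorizations whose factors agree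
up to reversal.  (`[1]` is a two-sided identity for `∘`, so the empty fold is harmless.) -/
def simRel (α β : List ℕ) : Prop :=
  ∃ L M : List (List ℕ),
    List.Forall₂ (fun γ δ => (γ ≠ [] ∧ ∀ x ∈ γ, 0 < x) ∧ (δ = γ ∨ δ = γ.reverse)) L M ∧
    α = L.foldr compOp [1] ∧ β = M.foldr compOp [1]

/-- A trivial factorization `α = β ∘ γ`. -/
def TrivialFac (β γ : List ℕ) : Prop :=
  β = [1] ∨ γ = [1] ∨ (β.length = 1 ∧ γ.length = 1) ∨
    ((∀ x ∈ β, x = 1) ∧ ∀ x ∈ γ, x = 1)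

/-- `L` is an irreducible factorization of `α`. -/
def IsIrreducibleFac (α : List ℕ) (L : List (List ℕ)) : Prop :=
  (∀ γ ∈ L, γ ≠ [] ∧ ∀ x ∈ γ, 0 < x) ∧
  α = L.foldr compOp [1] ∧
  (∀ i : ℕ, ∀ h : i + 1 < L.length,
    ¬ TrivialFac (L.get ⟨i, by omega⟩) (L.get ⟨i + 1, h⟩)) ∧
  (∀ γ ∈ L, ∀ δ ε : List ℕ, δ ≠ [] → (∀ x ∈ δ, 0 < x) → ε ≠ [] → (∀ x ∈ ε, 0 < x) →
    γ = compOp δ ε → TrivialFac δ ε)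

/-- All compositions of `n` (lists of positive integers with sum `n`). -/
def comps : ℕ → List (List ℕ)
  | 0 => [[]]
  | n + 1 => (List.range (n + 1)).attach.flatMap fun j =>
      (comps j.1).map (fun c => (n + 1 - j.1) :: c)
  decreasing_by exact List.mem_range.mp j.2

/-- All refinements `α ≼ λ` of a composition `λ`. -/
def refinements : List ℕ → List (List ℕ)
  | [] => [[]]
  | a :: l => (comps a).flatMap fun c => (refinements l).map (fun r => c ++ r)

/-- All compositions `α ⊆ λ`: `ℓ(α) = ℓ(λ)` and `1 ≤ α_i ≤ λ_i`. -/
def boundedLists : List ℕ → List (List ℕ)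
  | [] => [[]]
  | a :: l => (List.range a).flatMap fun j => (boundedLists l).map (fun r => (j + 1) :: r)

/-! ## Expansions of weighted graphs -/

/-- Given a decomposition `L` of `β` witnessing `β ≼ α`, vertex `a` of `H` is in the block
`R(v_v)` (0-based `v`) when `a` lies among the consecutively labelled vertices of block `v`. -/
def inBlock (L : List (List ℕ)) (v a : ℕ) : Prop :=
  ((L.take v).map List.length).sum ≤ a ∧ a < ((L.take (v + 1)).map List.length).sum

/-- The relation `a R b`: `a` and `b` lie in a common block `R(v)`. -/
def Rrel (L : List (List ℕ)) (a b : ℕ) : Prop :=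
  ∃ v : ℕ, inBlock L v a ∧ inBlock L v b

/-! ## The lattice of contractions and its Möbius function -/

/-- The restriction of the graph `E` to `B` is connected. -/
def ConnOn {V : Type*} (E : Multiset (Sym2 V)) (B : Set V) : Prop :=
  ∀ a ∈ B, ∀ b ∈ B, Relation.ReflTransGen (fun x y => x ∈ B ∧ y ∈ B ∧ s(x, y) ∈ E) a b

/-- A connected set partition of the graph `E` (as a setoid on the vertices). -/
def ConnPart {V : Type*} (E : Multiset (Sym2 V)) (σ : Setoid V) : Prop :=
  ∀ v : V, ConnOn E {u | σ.r u v}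

/-- The lattice of contractions `L_G`: connected set partitions ordered by refinement. -/
def LContr {V : Type*} (E : Multiset (Sym2 V)) : Type _ := {σ : Setoid V // ConnPart E σ}

noncomputable instance setoidFintype {V : Type*} [Fintype V] : Fintype (Setoid V) :=
  Fintype.ofInjective (fun s : Setoid V => s.r)
    (fun s t h => by cases s; cases t; simp only at h; subst h; rfl)

noncomputable instance {V : Type*} [Fintype V] (E : Multiset (Sym2 V)) : Fintype (LContr E) :=
  letI := Classical.decPred (ConnPart E)
  Subtype.fintype _

instance {V : Type*} (E : Multiset (Sym2 V)) : PartialOrder (LContr E) :=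
  Subtype.partialOrder _

noncomputable instance {V : Type*} [Fintype V] (E : Multiset (Sym2 V)) :
    LocallyFiniteOrder (LContr E) :=
  letI := Classical.decRel (α := LContr E) (· < ·)
  letI := Classical.decRel (α := LContr E) (· ≤ ·)
  Fintype.toLocallyFiniteOrder

/-- The Möbius function of the lattice of contractions. -/
noncomputable def mobLC {V : Type*} [Fintype V] (E : Multiset (Sym2 V))
    (x y : LContr E) : ℚ :=
  letI := Classical.decEq (LContr E)
  IncidenceAlgebra.mu ℚ x y

/-- `p_{type(π,w)}`: the product over the blocks of `π` of `p_{(total weight of block)}`. -/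
noncomputable def ptype {V : Type*} [Fintype V] (σ : Setoid V) (w : V → ℕ) :
    MvPowerSeries ℕ+ ℚ :=
  letI := Classical.decEq (Quotient σ)
  letI := @Quotient.fintype V _ σ (Classical.decRel _)
  ∏ c : Quotient σ, pS (∑ v : V, if Quotient.mk σ v = c then w v else 0)

/-- `0̂`, the minimal element of the lattice of contractions: each vertex is its own block. -/
def botLC {V : Type*} (E : Multiset (Sym2 V)) : LContr E :=
  ⟨⊥, by
    intro v a ha b hb
    have ha' : a = v := ha
    have hb' : b = v := hb
    subst ha'; subst hb'; exact Relation.ReflTransGen.refl⟩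

/-! ## Composition of a composition with a weighted graph -/

section comp
variable {V : Type*} [Fintype V]

/-- The gluing relation: for `i ∈ S` (1-based), identify the vertex `z` of copy `i`
with the vertex `a` of copy `i + 1` (0-based copies `i - 1` and `i`). -/
def glueRel (a z : V) (n : ℕ) (S : Finset ℕ) : (Fin n × V) → (Fin n × V) → Prop :=
  fun x y => ∃ i ∈ S, ∃ (h1 : i - 1 < n) (h2 : i < n),
    x = (⟨i - 1, h1⟩, z) ∧ y = (⟨i, h2⟩, a)

def glueSetoid (a z : V) (n : ℕ) (S : Finset ℕ) : Setoid (Fin n × V) :=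
  Relation.EqvGen.setoid (glueRel a z n S)

/-- Vertices of the graph obtained from `n` copies of a graph on `V` by contracting the
connecting edges `z_i a_{i+1}`, `i ∈ S`. -/
def compV (a z : V) (n : ℕ) (S : Finset ℕ) : Type _ := Quotient (glueSetoid a z n S)

noncomputable instance (a z : V) (n : ℕ) (S : Finset ℕ) : Fintype (compV a z n S) :=
  @Quotient.fintype _ _ (glueSetoid a z n S) (Classical.decRel _)

/-- Edges: all edges of the `n` copies of `E`, together with the connecting edges
`z_i a_{i+1}` for `i ∈ [n-1] − S` (the ones not contracted). -/
noncomputable def compE (E : Multiset (Sym2 V)) (a z : V) (n : ℕ) (S : Finset ℕ) :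
    Multiset (Sym2 (compV a z n S)) :=
  (∑ i : Fin n, E.map (Sym2.map fun v =>
      (Quotient.mk (glueSetoid a z n S) (i, v) : compV a z n S)))
  + ((Finset.Ioo 0 n \ S).attach.val.map fun i =>
      s((Quotient.mk (glueSetoid a z n S)
          (⟨i.1 - 1, by
            have := i.2; simp only [Finset.mem_sdiff, Finset.mem_Ioo] at this; omega⟩, z) :
            compV a z n S),
        (Quotient.mk (glueSetoid a z n S)
          (⟨i.1, by
            have := i.2; simp only [Finset.mem_sdiff, Finset.mem_Ioo] at this; omega⟩, a) :
            compV a z n S)))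

/-- Weights: a contracted vertex receives the sum of the weights of its constituents. -/
noncomputable def compW (w : V → ℕ) (a z : V) (n : ℕ) (S : Finset ℕ) :
    compV a z n S → ℕ :=
  fun c => ∑ x : Fin n × V,
    if (Quotient.mk (glueSetoid a z n S) x : compV a z n S) = c then w x.2 else 0

/-- `X_{α ∘ (G,w)}`: take `|α|` copies of `(G,w)`, join successive copies by edges
`z_i a_{i+1}`, and contract exactly the connecting edges with `i ∈ set(α^c)`. -/
noncomputable def Xcomp (E : Multiset (Sym2 V)) (w : V → ℕ) (a z : V) (α : List ℕ) :
    MvPowerSeries ℕ+ ℚ :=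
  X (compE E a z α.sum (Finset.Ioo 0 α.sum \ setC α))
    (compW w a z α.sum (Finset.Ioo 0 α.sum \ setC α))

end comp

/-!
The chromatic symmetric function is multiplicative over disjoint unions, so both identities
reduce to a single star `S_{s+1}` and a single power sum. By inclusion–exclusion over the set `T`
of leaves coloured like the centre, `X_{S_{s+1}} = ∑_T (-1)^{|T|} p_{|T|+1} p_1^{s-|T|}`: forcing
the leaves of `T` onto the centre's colour amounts to colouring an edgeless graph with one vertex
of weight `|T|+1` and `s-|T|` vertices of weight `1`. Hence `X_{S_{s+1}}` is the image of
`(p_{j+1})_j` under the binomial transform `f ↦ (n ↦ ∑_j (-1)^j C(n,j) f_j p_1^{n-j})`, which is an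
involution, so it also expresses `p_{s+1}` through stars. Multiplying out over the parts of `λ`
gives the sums over `α ⊆ λ`.
-/

open Finset

/-- The generating series `∑_a x^{μ a}` of a weighted set. `Nat.card` of an infinite set is `0`,
so this is only meaningful when the fibres of `μ` are finite. -/
noncomputable def genSeries {σ A : Type*} (μ : A → σ →₀ ℕ) : MvPowerSeries σ ℚ :=
  fun m => (Nat.card {a // μ a = m} : ℚ)

section genSeries

variable {σ : Type*}

lemma coeff_genSeries {A : Type*} (μ : A → σ →₀ ℕ) (m : σ →₀ ℕ) :
    MvPowerSeries.coeff m (genSeries μ) = Nat.card {a // μ a = m} := rfl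

lemma genSeries_comp_equiv {A B : Type*} (e : A ≃ B) (μ : B → σ →₀ ℕ) :
    genSeries (μ ∘ e) = genSeries μ :=
  funext fun _ => congrArg Nat.cast (Nat.card_congr (e.subtypeEquiv fun _ => Iff.rfl))

lemma genSeries_subtype_eq_sum {A : Type*} {μ : A → σ →₀ ℕ} (hμ : ∀ m, Finite {a // μ a = m})
    {P : A → Prop} {ι : Type*} (s : Finset ι) (c : ι → ℚ) (Q : ι → A → Prop)
    (hPQ : ∀ a, (if P a then 1 else 0 : ℚ) = ∑ i ∈ s, c i * if Q i a then 1 else 0) :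
    genSeries (fun a : {a // P a} => μ a) =
      ∑ i ∈ s, c i • genSeries (fun a : {a // Q i a} => μ a) := by
  ext m
  have : Fintype {a // μ a = m} := Fintype.ofFinite _
  have card_eq (R : A → Prop) :
      (Nat.card {a : {a // R a} // μ a = m} : ℚ) = ∑ a : {a // μ a = m}, if R a then 1 else 0 := by
    rw [Nat.card_congr ((Equiv.subtypeSubtypeEquivSubtypeInter R (μ · = m)).trans
      ((Equiv.subtypeEquivRight fun _ => and_comm).trans
        (Equiv.subtypeSubtypeEquivSubtypeInter (μ · = m) R).symm)),
      Nat.card_eq_fintype_card, Fintype.card_subtype, sum_boole]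
  simp only [map_sum, MvPowerSeries.coeff_smul, coeff_genSeries, card_eq, hPQ, mul_sum]
  exact sum_comm

lemma finite_subtype_fiber {A : Type*} {μ : A → σ →₀ ℕ} {m : σ →₀ ℕ} (hμ : Finite {a // μ a = m})
    (P : A → Prop) : Finite {a : {a // P a} // μ a = m} :=
  Finite.of_injective (fun a => (⟨a.1.1, a.2⟩ : {a // μ a = m}))
    fun _ _ h => Subtype.ext (Subtype.ext (congrArg (·.1) h :))

end genSeries

section genSeries_pi

variable {σ ι : Type*} [Fintype ι] {A : ι → Type*} (μ : ∀ i, A i → σ →₀ ℕ)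

noncomputable def sumFiberEquiv (m : σ →₀ ℕ) :
    {a : ∀ i, A i // ∑ i, μ i (a i) = m} ≃
      Σ l : (finsuppAntidiag (univ : Finset ι) m), ∀ i, {x // μ i x = l.1 i} :=
  (Equiv.sigmaFiberEquiv fun a : {a : ∀ i, A i // ∑ i, μ i (a i) = m} =>
      (⟨Finsupp.equivFunOnFinite.symm fun i => μ i (a.1 i), by simpa using a.2⟩ :
        finsuppAntidiag (univ : Finset ι) m)).symm.trans <|
    Equiv.sigmaCongrRight fun l =>
      { toFun := fun a i =>
          ⟨a.1.1 i, congrArg (fun l : finsuppAntidiag (univ : Finset ι) m => l.1 i) a.2⟩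
        invFun := fun b => ⟨⟨fun i => (b i).1,
            (sum_congr rfl fun i _ => (b i).2).trans (mem_finsuppAntidiag.1 l.2).1⟩,
          Subtype.ext (Finsupp.ext fun i => (b i).2)⟩
        left_inv := fun _ => rfl
        right_inv := fun _ => rfl }

variable {μ}

lemma finite_sum_fiber (hμ : ∀ i m, Finite {x // μ i x = m}) (m : σ →₀ ℕ) :
    Finite {a : ∀ i, A i // ∑ i, μ i (a i) = m} :=
  have := hμ
  .of_equiv _ (sumFiberEquiv μ m).symm

lemma genSeries_pi (hμ : ∀ i m, Finite {x // μ i x = m}) :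
    genSeries (fun a : ∀ i, A i => ∑ i, μ i (a i)) = ∏ i, genSeries (μ i) := by
  ext m
  have := hμ
  rw [MvPowerSeries.coeff_prod, coeff_genSeries, Nat.card_congr (sumFiberEquiv μ m),
    Nat.card_sigma]
  push_cast [Nat.card_pi, coeff_genSeries]
  exact sum_coe_sort (finsuppAntidiag univ m) fun l => ∏ i, (Nat.card {x // μ i x = l i} : ℚ)

end genSeries_pi

section colourings

variable {V W C : Type*}

lemma proper_sum_iff {ι : Type*} (s : Finset ι) (E : ι → Multiset (Sym2 V)) (κ : V → C) :
    Proper (∑ i ∈ s, E i) κ ↔ ∀ i ∈ s, Proper (E i) κ := by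
  simp only [Proper, Multiset.mem_sum]
  exact ⟨fun h i hi u v huv => h u v ⟨i, hi, huv⟩, fun h u v ⟨i, hi, huv⟩ => h i hi u v huv⟩

lemma proper_map_iff (f : V → W) (E : Multiset (Sym2 V)) (κ : W → C) :
    Proper (E.map (Sym2.map f)) κ ↔ Proper E (κ ∘ f) := by
  constructor
  · intro h a b hab
    exact h (f a) (f b) (Multiset.mem_map.2 ⟨s(a, b), hab, Sym2.map_mk f a b⟩)
  · intro h u v huv
    obtain ⟨e, he, hmap⟩ := Multiset.mem_map.1 huv
    induction e using Sym2.ind with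
    | _ a b =>
      rw [Sym2.map_mk] at hmap
      rcases Sym2.eq_iff.1 hmap with ⟨rfl, rfl⟩ | ⟨rfl, rfl⟩
      · exact h a b he
      · exact (h a b he).symm

variable [Fintype V]

lemma X_eq_genSeries (E : Multiset (Sym2 V)) (w : V → ℕ) :
    X E w = genSeries (fun κ : {κ : V → ℕ+ // Proper E κ} => mon w κ) :=
  funext fun m => congrArg Nat.cast
    (Nat.card_congr (Equiv.subtypeSubtypeEquivSubtypeInter (Proper E) (mon w · = m)).symm)

lemma subsingleton_single_fiber {a : ℕ} (ha : 0 < a) (m : ℕ+ →₀ ℕ) :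
    Subsingleton {j : ℕ+ // Finsupp.single j a = m} :=
  ⟨fun j k => Subtype.ext <| Finsupp.single_left_injective ha.ne' (j.2.trans k.2.symm)⟩

lemma finite_single_fiber {a : ℕ} (ha : 0 < a) (m : ℕ+ →₀ ℕ) :
    Finite {j : ℕ+ // Finsupp.single j a = m} :=
  have := subsingleton_single_fiber ha m
  Finite.of_subsingleton

lemma genSeries_single {a : ℕ} (ha : 0 < a) :
    genSeries (fun j : ℕ+ => Finsupp.single j a) = pS a := by
  ext m
  rw [coeff_genSeries, MvPowerSeries.coeff_apply, pS]
  split_ifs with h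
  · obtain ⟨j, rfl⟩ := h
    rw [Nat.card_eq_one_iff_unique.2 ⟨subsingleton_single_fiber ha _, ⟨⟨j, rfl⟩⟩⟩, Nat.cast_one]
  · have : IsEmpty {j : ℕ+ // Finsupp.single j a = m} := ⟨fun j => h ⟨j, j.2.symm⟩⟩
    rw [Nat.card_of_isEmpty, Nat.cast_zero]

variable {w : V → ℕ}

lemma finite_mon_fiber (hw : ∀ v, 0 < w v) (m : ℕ+ →₀ ℕ) : Finite {κ : V → ℕ+ // mon w κ = m} :=
  finite_sum_fiber (μ := fun v j => Finsupp.single j (w v)) (fun v => finite_single_fiber (hw v)) m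

lemma genSeries_mon (hw : ∀ v, 0 < w v) : genSeries (mon w) = ∏ v, pS (w v) := by
  rw [← prod_congr rfl fun v _ => genSeries_single (hw v)]
  exact genSeries_pi (A := fun _ => ℕ+) (μ := fun v j => Finsupp.single j (w v))
    fun v => finite_single_fiber (hw v)

end colourings

section contraction

variable {V W : Type*} [Fintype V] [Fintype W] [DecidableEq W]

lemma mon_comp (w : V → ℕ) (f : V → W) (κ : W → ℕ+) :
    mon w (κ ∘ f) = mon (fun y => ∑ v with f v = y, w v) κ := by
  simp only [mon, Finsupp.single_finsetSum]
  refine (sum_fiberwise univ f _).symm.trans <| sum_congr rfl fun y _ =>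
    sum_congr rfl fun v hv => ?_
  rw [Function.comp_apply, (mem_filter.1 hv).2]

lemma genSeries_range_comp_eq_prod {w : V → ℕ} {f : V → W} (hf : Function.Surjective f)
    (hw : ∀ v, 0 < w v) :
    genSeries (fun κ : Set.range (fun κ' : W → ℕ+ => κ' ∘ f) => mon w κ) =
      ∏ y, pS (∑ v with f v = y, w v) := by
  have hpos : ∀ y, 0 < ∑ v with f v = y, w v := by
    intro y
    obtain ⟨v, rfl⟩ := hf y
    exact (hw v).trans_le (single_le_sum (fun _ _ => Nat.zero_le _) (by simp))
  rw [← genSeries_mon hpos, ← genSeries_comp_equiv (Equiv.ofInjective _ hf.injective_comp_right)]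
  exact congrArg genSeries (funext fun κ' => mon_comp w f κ')

end contraction

lemma proper_unionE_iff {k : ℕ} {m : Fin k → ℕ} {C : Type*} (Es : ∀ i, Multiset (Sym2 (Fin (m i))))
    (κ : (Σ i, Fin (m i)) → C) :
    Proper (unionE Es) κ ↔ ∀ i, Proper (Es i) fun v => κ ⟨i, v⟩ := by
  simp only [unionE, proper_sum_iff, proper_map_iff, mem_univ, true_implies]
  rfl

lemma Xunion_eq_prod {k : ℕ} {m : Fin k → ℕ} (Es : ∀ i, Multiset (Sym2 (Fin (m i))))
    {ws : ∀ i, Fin (m i) → ℕ} (hw : ∀ i v, 0 < ws i v) :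
    Xunion Es ws = ∏ i, X (Es i) (ws i) := by
  let e : {κ // Proper (unionE Es) κ} ≃ ∀ i, {κ : Fin (m i) → ℕ+ // Proper (Es i) κ} :=
    ((Equiv.piCurry fun _ _ => ℕ+).subtypeEquiv (proper_unionE_iff Es)).trans
      Equiv.subtypePiEquivPi
  have hmon : (fun κ : {κ // Proper (unionE Es) κ} => mon (fun v => ws v.1 v.2) κ.1) =
      (fun b => ∑ i, mon (ws i) (b i).1) ∘ e :=
    funext fun κ => Fintype.sum_sigma _
  simp only [Xunion, X_eq_genSeries, hmon, genSeries_comp_equiv]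
  exact genSeries_pi (A := fun i => {κ : Fin (m i) → ℕ+ // Proper (Es i) κ})
    (μ := fun i κ => mon (ws i) κ.1) fun i m => finite_subtype_fiber (finite_mon_fiber (hw i) m) _

lemma sum_neg_one_pow_mul_choose_mul_choose (n i : ℕ) :
    ∑ j ∈ range (n + 1), ((-1 : ℚ) ^ j * n.choose j) * ((-1) ^ i * j.choose i) =
      if i = n then 1 else 0 := by
  have vanish : ∀ j < i, ((-1 : ℚ) ^ j * n.choose j) * ((-1) ^ i * j.choose i) = 0 := by
    intro j hj
    rw [Nat.choose_eq_zero_of_lt hj, Nat.cast_zero, mul_zero, mul_zero]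
  rcases lt_or_ge n i with hni | hin
  · rw [if_neg hni.ne']
    exact sum_eq_zero fun j hj => vanish j (by rw [mem_range] at hj; omega)
  obtain ⟨k, rfl⟩ := Nat.exists_eq_add_of_le hin
  have shifted : ∀ t ∈ range (k + 1),
      ((-1 : ℚ) ^ (i + t) * (i + k).choose (i + t)) * ((-1) ^ i * (i + t).choose i) =
        (i + k).choose i * ((-1) ^ t * k.choose t) := by
    intro t _
    have h := Nat.choose_mul (n := i + k) (k := i + t) (s := i) (by omega)
    rw [Nat.add_sub_cancel_left, Nat.add_sub_cancel_left] at h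
    have hq : ((i + k).choose (i + t) : ℚ) * (i + t).choose i = (i + k).choose i * k.choose t := by
      exact_mod_cast h
    have hsq : (-1 : ℚ) ^ i * (-1) ^ i = 1 := by rw [← mul_pow]; norm_num
    rw [pow_add]
    linear_combination (-1 : ℚ) ^ t * hq +
      ((i + k).choose (i + t) * (i + t).choose i * (-1) ^ t : ℚ) * hsq
  have alternating : ∑ t ∈ range (k + 1), ((-1 : ℚ) ^ t * k.choose t) = if k = 0 then 1 else 0 := by
    exact_mod_cast Int.alternating_sum_range_choose (n := k)
  rw [show i + k + 1 = i + (k + 1) by omega, sum_range_add,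
    sum_eq_zero fun j hj => vanish j (mem_range.1 hj), zero_add, sum_congr rfl shifted,
    ← mul_sum, alternating]
  rcases Nat.eq_zero_or_pos k with rfl | hk
  · simp
  · rw [if_neg hk.ne', if_neg (by omega), mul_zero]

section binomialTransform

variable {A : Type*} [CommRing A] [Algebra ℚ A]

noncomputable def binomialTransform (c : A) (f : ℕ → A) (n : ℕ) : A :=
  ∑ j ∈ range (n + 1), ((-1 : ℚ) ^ j * n.choose j) • (f j * c ^ (n - j))

theorem binomialTransform_binomialTransform (c : A) (f : ℕ → A) :
    binomialTransform c (binomialTransform c f) = f := by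
  funext n
  have expand : ∀ j ∈ range (n + 1),
      ((-1 : ℚ) ^ j * n.choose j) • (binomialTransform c f j * c ^ (n - j)) =
        ∑ i ∈ range (n + 1), (((-1 : ℚ) ^ j * n.choose j) * ((-1) ^ i * j.choose i)) •
          (f i * c ^ (n - i)) := by
    intro j hj
    rw [mem_range] at hj
    calc _ = ∑ i ∈ range (j + 1), (((-1 : ℚ) ^ j * n.choose j) * ((-1) ^ i * j.choose i)) •
          (f i * c ^ (n - i)) := by
          rw [binomialTransform, sum_mul, smul_sum]
          refine sum_congr rfl fun i hi => ?_
          rw [mem_range] at hi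
          rw [smul_mul_assoc, smul_smul, mul_assoc (f i), ← pow_add,
            show j - i + (n - j) = n - i by omega]
      _ = _ := sum_subset (range_subset_range.2 (by omega)) fun i _ hi => by
          rw [mem_range, not_lt] at hi
          rw [Nat.choose_eq_zero_of_lt (n := j) (k := i) (by omega), Nat.cast_zero, mul_zero,
            mul_zero, zero_smul]
  simp only [binomialTransform] at expand ⊢
  rw [sum_congr rfl expand, sum_comm]
  simp only [← sum_smul, sum_neg_one_pow_mul_choose_mul_choose, ite_smul, one_smul,
    zero_smul, sum_ite_eq', mem_range, Nat.lt_succ_self, if_true, Nat.sub_self, pow_zero,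
    mul_one]

end binomialTransform

lemma boole_forall_not_eq_sum_powerset {ι : Type*} (s : Finset ι) (p : ι → Prop) :
    (if ∀ i ∈ s, ¬ p i then 1 else 0 : ℚ) =
      ∑ T ∈ s.powerset, (-1) ^ T.card * if ∀ i ∈ T, p i then 1 else 0 := by
  have hfilter : s.powerset.filter (fun T => ∀ i ∈ T, p i) = (s.filter p).powerset := by
    ext T
    simp only [mem_filter, mem_powerset, subset_iff]
    exact ⟨fun h i hi => ⟨h.1 hi, h.2 i hi⟩, fun h => ⟨fun i hi => (h hi).1, fun i hi => (h hi).2⟩⟩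
  have alternating := sum_powerset_neg_one_pow_card (x := s.filter p)
  simp only [mul_boole, ← sum_filter, hfilter]
  exact (if_congr filter_eq_empty_iff.symm rfl rfl).trans (by exact_mod_cast alternating.symm)

section star

variable {s : ℕ}

lemma proper_starE_succ_iff {C : Type*} (κ : Fin (s + 1) → C) :
    Proper (starE (s + 1)) κ ↔ ∀ i : Fin s, κ i.castSucc ≠ κ (Fin.last s) := by
  constructor
  · intro h i
    exact h _ _ (Multiset.mem_map.2 ⟨(i.castSucc, Fin.last s), by simp, rfl⟩)
  · intro h u v huv
    obtain ⟨⟨a, b⟩, hab, he⟩ := Multiset.mem_map.1 huv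
    simp only [mem_val, mem_filter, mem_univ, true_and] at hab
    obtain ⟨a, rfl⟩ : ∃ i : Fin s, i.castSucc = a := ⟨⟨a, by omega⟩, rfl⟩
    obtain rfl : b = Fin.last s := Fin.ext (by simp; omega)
    rcases Sym2.eq_iff.1 he with ⟨rfl, rfl⟩ | ⟨rfl, rfl⟩
    · exact h a
    · exact (h a).symm

def contractLeaves (T : Finset (Fin s)) : Fin (s + 1) → Option {i : Fin s // i ∉ T} :=
  Fin.lastCases none fun i => if h : i ∈ T then none else some ⟨i, h⟩

variable (T : Finset (Fin s))

@[simp] lemma contractLeaves_last : contractLeaves T (Fin.last s) = none := by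
  simp [contractLeaves]

@[simp] lemma contractLeaves_castSucc (i : Fin s) :
    contractLeaves T i.castSucc = if h : i ∈ T then none else some ⟨i, h⟩ := by
  simp [contractLeaves]

lemma contractLeaves_surjective : Function.Surjective (contractLeaves T) := by
  rintro (_ | ⟨i, hi⟩)
  · exact ⟨Fin.last s, by simp⟩
  · exact ⟨i.castSucc, by simp [hi]⟩

lemma mem_range_comp_contractLeaves_iff {C : Type*} (κ : Fin (s + 1) → C) :
    κ ∈ Set.range (fun κ' => κ' ∘ contractLeaves T) ↔ ∀ i ∈ T, κ i.castSucc = κ (Fin.last s) := by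
  constructor
  · rintro ⟨κ', rfl⟩ i hi
    simp [hi]
  · intro h
    refine ⟨fun y => y.elim (κ (Fin.last s)) fun i => κ i.1.castSucc, funext fun v => ?_⟩
    induction v using Fin.lastCases with
    | last => simp
    | cast i => by_cases hi : i ∈ T <;> simp [hi, h]

lemma card_contractLeaves_fiber_none :
    (univ.filter fun v => contractLeaves T v = none).card = T.card + 1 := by
  have : univ.filter (fun v => contractLeaves T v = none) =
      insert (Fin.last s) (T.map Fin.castSuccEmb) := by
    ext v
    induction v using Fin.lastCases with
    | last => simp
    | cast i => by_cases hi : i ∈ T <;> simp [hi, Fin.castSucc_ne_last]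
  rw [this, card_insert_of_notMem (by simp [Fin.castSucc_ne_last]), card_map]

lemma card_contractLeaves_fiber_some (i : {i : Fin s // i ∉ T}) :
    (univ.filter fun v => contractLeaves T v = some i).card = 1 := by
  rw [card_eq_one]
  refine ⟨i.1.castSucc, ?_⟩
  ext v
  induction v using Fin.lastCases with
  | last => simp [eq_comm (a := Fin.last s), Fin.castSucc_ne_last]
  | cast j =>
    by_cases hj : j ∈ T
    · have : j ≠ i.1 := fun h => i.2 (h ▸ hj)
      simp [hj, this]
    · simp [hj, Subtype.ext_iff, eq_comm]

end star

noncomputable def starX (n : ℕ) : MvPowerSeries ℕ+ ℚ := X (starE n) fun _ => 1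

theorem starX_succ (s : ℕ) : starX (s + 1) = binomialTransform (pS 1) (fun j => pS (j + 1)) s := by
  have contracted : ∀ T : Finset (Fin s),
      genSeries (fun κ : {κ // κ ∈ Set.range fun κ' => κ' ∘ contractLeaves T} =>
        mon (fun _ => 1) κ.1) = pS (T.card + 1) * pS 1 ^ (s - T.card) := by
    intro T
    rw [genSeries_range_comp_eq_prod (contractLeaves_surjective T) fun _ => one_pos,
      Fintype.prod_option]
    simp only [sum_const, smul_eq_mul, mul_one, card_contractLeaves_fiber_none,
      card_contractLeaves_fiber_some, prod_const, card_univ,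
      Fintype.card_subtype_compl, Fintype.card_coe, Fintype.card_fin]
  rw [starX, X_eq_genSeries, genSeries_subtype_eq_sum (finite_mon_fiber fun _ => one_pos)
    univ.powerset (fun T => (-1) ^ T.card)
    (fun T κ => κ ∈ Set.range fun κ' => κ' ∘ contractLeaves T) fun (κ : Fin (s + 1) → ℕ+) => ?_]
  · simp only [contracted]
    rw [sum_powerset_apply_card fun j => (-1 : ℚ) ^ j • (pS (j + 1) * pS 1 ^ (s - j))]
    simp only [binomialTransform, card_univ, Fintype.card_fin]
    refine sum_congr rfl fun j _ => ?_
    rw [← Nat.cast_smul_eq_nsmul ℚ, smul_smul, mul_comm]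
  · simp only [proper_starE_succ_iff, mem_range_comp_contractLeaves_iff]
    simpa using
      boole_forall_not_eq_sum_powerset univ fun i : Fin s => κ i.castSucc = κ (Fin.last s)

theorem pS_succ (s : ℕ) : pS (s + 1) = binomialTransform (pS 1) (fun j => starX (j + 1)) s := by
  rw [show (fun j => starX (j + 1)) = binomialTransform (pS 1) (fun j => pS (j + 1)) from
    funext starX_succ, binomialTransform_binomialTransform]

lemma starX_one : starX 1 = pS 1 := by
  simp [starX_succ 0, binomialTransform]

lemma XStars_eq_prod (l : List ℕ) : XStars l = (l.map starX).prod := by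
  rw [XStars, Xunion_eq_prod _ fun _ _ => one_pos, ← Fin.prod_univ_fun_getElem]
  rfl

def boundedListCoeff (l α : List ℕ) : ℚ :=
  (-1) ^ (α.sum - l.length) * ((List.zipWith (fun a b => Nat.choose (a - 1) (b - 1)) l α).prod : ℚ)

lemma mem_boundedLists_cons {a : ℕ} {l α : List ℕ} :
    α ∈ boundedLists (a :: l) ↔ ∃ j < a, ∃ r ∈ boundedLists l, α = (j + 1) :: r := by
  simp only [boundedLists, List.mem_flatMap, List.mem_range, List.mem_map]
  exact exists_congr fun j => and_congr_right fun _ => exists_congr fun r => and_congr_right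
    fun _ => eq_comm

lemma sum_bounds_of_mem_boundedLists {l α : List ℕ} (h : α ∈ boundedLists l) :
    l.length ≤ α.sum ∧ α.sum ≤ l.sum := by
  induction l generalizing α with
  | nil => simp_all [boundedLists]
  | cons a l ih =>
    obtain ⟨j, hj, r, hr, rfl⟩ := mem_boundedLists_cons.1 h
    have := ih hr
    simp only [List.length_cons, List.sum_cons]
    omega

lemma boundedListCoeff_cons {n j : ℕ} {l r : List ℕ} (hr : r ∈ boundedLists l) :
    boundedListCoeff ((n + 1) :: l) ((j + 1) :: r) =
      ((-1) ^ j * n.choose j) * boundedListCoeff l r := by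
  have := (sum_bounds_of_mem_boundedLists hr).1
  simp only [boundedListCoeff, List.sum_cons, List.length_cons, List.zipWith_cons_cons,
    List.prod_cons, Nat.add_sub_cancel, Nat.cast_mul,
    show j + 1 + r.sum - (l.length + 1) = j + (r.sum - l.length) by omega, pow_add]
  ring

theorem prod_map_eq_sum_boundedLists {A : Type*} [CommRing A] [Algebra ℚ A] {Z H : ℕ → A} {x : A}
    (hHZ : ∀ n, H (n + 1) = binomialTransform x (fun j => Z (j + 1)) n) {l : List ℕ}
    (hl : ∀ a ∈ l, 0 < a) :
    (l.map H).prod = ((boundedLists l).map fun α =>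
      boundedListCoeff l α • ((α.map Z).prod * x ^ (l.sum - α.sum))).sum := by
  induction l with
  | nil => simp [boundedLists, boundedListCoeff]
  | cons a l ih =>
    obtain ⟨n, rfl⟩ : ∃ n, a = n + 1 := ⟨a - 1, by have := hl a List.mem_cons_self; omega⟩
    rw [List.map_cons, List.prod_cons, ih fun b hb => hl b (List.mem_cons_of_mem _ hb), hHZ,
      binomialTransform, sum_mul]
    simp only [boundedLists, List.flatMap, List.map_flatten, List.sum_flatten, List.map_map]
    refine sum_congr rfl fun j hj => ?_
    rw [← List.sum_map_mul_left]
    simp only [Function.comp_apply, List.map_map]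
    refine congrArg List.sum (List.map_congr_left fun r hr => ?_)
    have := sum_bounds_of_mem_boundedLists hr
    rw [mem_range] at hj
    simp only [Function.comp_apply, boundedListCoeff_cons hr, List.map_cons, List.prod_cons,
      List.sum_cons, smul_mul_smul_comm,
      show n + 1 + l.sum - (j + 1 + r.sum) = (n - j) + (l.sum - r.sum) by omega, pow_add]
    congr 1
    ring

lemma prod_map_sortDesc_append_replicate {M : Type*} [CommMonoid M] (f : ℕ → M) (α : List ℕ)
    (k : ℕ) : ((sortDesc α ++ List.replicate k 1).map f).prod = (α.map f).prod * f 1 ^ k := by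
  rw [List.map_append, List.prod_append, List.map_replicate, List.prod_replicate,
    sortDesc, ((List.perm_insertionSort _ α).map f).prod_eq]

theorem star_basis_power_sum_expansions_general
    (l : List ℕ) (hpos : ∀ x ∈ l, 0 < x) :
    pProd l =
      ((boundedLists l).map fun α =>
        (((-1 : ℚ) ^ (α.sum - l.length)) *
          ((List.zipWith (fun a b => Nat.choose (a - 1) (b - 1)) l α).prod : ℚ)) •
        XStars (sortDesc α ++ List.replicate (l.sum - α.sum) 1)).sum ∧
    XStars l =
      ((boundedLists l).map fun α =>
        (((-1 : ℚ) ^ (α.sum - l.length)) *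
          ((List.zipWith (fun a b => Nat.choose (a - 1) (b - 1)) l α).prod : ℚ)) •
        pProd (sortDesc α ++ List.replicate (l.sum - α.sum) 1)).sum := by
  constructor
  · rw [pProd, prod_map_eq_sum_boundedLists pS_succ hpos]
    simp only [XStars_eq_prod, prod_map_sortDesc_append_replicate, starX_one, boundedListCoeff]
  · rw [XStars_eq_prod, prod_map_eq_sum_boundedLists starX_succ hpos]
    simp only [pProd, prod_map_sortDesc_append_replicate, boundedListCoeff]

/-- **Proposition.** For every partition `λ`:
`p_λ = ∑_{α ⊆ λ} (-1)^{|α| - ℓ(λ)} ∏_i C(λ_i - 1, α_i - 1) · X_{S_{α̃·(1^{|λ|-|α|})}}` and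
`X_{S_λ} = ∑_{α ⊆ λ} (-1)^{|α| - ℓ(λ)} ∏_i C(λ_i - 1, α_i - 1) · p_{α̃·(1^{|λ|-|α|})}`,
where `α ⊆ λ` means `ℓ(α) = ℓ(λ)` and `α_i ≤ λ_i` for all `i`. -/
theorem star_basis_power_sum_expansions
    (l : List ℕ) (hsort : l.Pairwise (· ≥ ·)) (hpos : ∀ x ∈ l, 0 < x) :
    pProd l =
      ((boundedLists l).map fun α =>
        (((-1 : ℚ) ^ (α.sum - l.length)) *
          ((List.zipWith (fun a b => Nat.choose (a - 1) (b - 1)) l α).prod : ℚ)) •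
        XStars (sortDesc α ++ List.replicate (l.sum - α.sum) 1)).sum ∧
    XStars l =
      ((boundedLists l).map fun α =>
        (((-1 : ℚ) ^ (α.sum - l.length)) *
          ((List.zipWith (fun a b => Nat.choose (a - 1) (b - 1)) l α).prod : ℚ)) •
        pProd (sortDesc α ++ List.replicate (l.sum - α.sum) 1)).sum :=
  star_basis_power_sum_expansions_general l hpos

end CSF
end

section
/- For any two nonempty compositions α and β, the extended chromatic symmetric functions of weighted paths satisfy the multiplication rule X_{(P_{ℓ(α)},α)} · X_{(P_{ℓ(β)},β)} = X_{(P_{ℓ(α·β)},α·β)} + X_{(P_{ℓ(α⊙β)},α⊙β)}. -/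
open scoped BigOperators
open scoped Classical

namespace CSF

/-! Coefficientwise, `X_{(P,α)} · X_{(P,β)}` counts pairs of proper colourings of the two paths.
Join the last vertex of the first path to the first vertex of the second. If their colours
differ, the pair is a proper colouring of `P_{α·β}`; if they agree, identifying the two vertices
gives a proper colouring of `P_{α⊙β}`, the merged vertex carrying weight `α_ℓ + β_1`. Both
correspondences preserve the monomial. Colourings of a path are recorded as lists of colours,
so that joining paths is list concatenation and properness is `List.IsChain (· ≠ ·)`. -/

lemma mem_pathE_iff {n : ℕ} {u v : Fin n} :
    s(u, v) ∈ pathE n ↔ (u : ℕ) + 1 = v ∨ (v : ℕ) + 1 = u := by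
  simp only [pathE, Multiset.mem_map, Finset.mem_val, Finset.mem_filter, Finset.mem_univ,
    true_and, Prod.exists, Sym2.eq_iff]
  constructor
  · rintro ⟨a, b, hab, ⟨rfl, rfl⟩ | ⟨rfl, rfl⟩⟩
    exacts [Or.inl hab, Or.inr hab]
  · rintro (h | h)
    exacts [⟨u, v, h, Or.inl ⟨rfl, rfl⟩⟩, ⟨v, u, h, Or.inr ⟨rfl, rfl⟩⟩]

lemma proper_pathE_iff_isChain {n : ℕ} (κ : Fin n → ℕ+) :
    Proper (pathE n) κ ↔ (List.ofFn κ).IsChain (· ≠ ·) := by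
  rw [List.isChain_ofFn]
  refine ⟨fun h i hi => h _ _ (mem_pathE_iff.2 (Or.inl rfl)), fun h u v huv => ?_⟩
  obtain ⟨u, hu⟩ := u
  obtain ⟨v, hv⟩ := v
  rcases mem_pathE_iff.1 huv with rfl | rfl
  exacts [h u hv, (h v hu).symm]

section FiberSeries

variable {σ A B : Type*}

/-- The coefficient of `x^m` counts the elements of weight `m`; `Nat.card` makes it `0` on an
infinite fibre, hence the finiteness hypotheses below. -/
noncomputable def fiberSeries (f : A → σ →₀ ℕ) : MvPowerSeries σ ℚ :=
  fun m => Nat.card {a // f a = m}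

lemma fiberSeries_congr {f : A → σ →₀ ℕ} {g : B → σ →₀ ℕ} (e : A ≃ B)
    (h : ∀ a, g (e a) = f a) : fiberSeries f = fiberSeries g :=
  funext fun m => congrArg Nat.cast <| Nat.card_congr <| e.subtypeEquiv fun a => by rw [h]

lemma fiberSeries_sumElim (f : A → σ →₀ ℕ) (g : B → σ →₀ ℕ)
    [∀ m, Finite {a // f a = m}] [∀ m, Finite {b // g b = m}] :
    fiberSeries (Sum.elim f g) = fiberSeries f + fiberSeries g := by
  funext m
  change (Nat.card {x // Sum.elim f g x = m} : ℚ) =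
    Nat.card {a // f a = m} + Nat.card {b // g b = m}
  rw [Nat.card_congr Equiv.subtypeSum]
  exact_mod_cast Nat.card_sum (α := {a // f a = m}) (β := {b // g b = m})

open Finset.HasAntidiagonal in
lemma fiberSeries_mul (f : A → σ →₀ ℕ) (g : B → σ →₀ ℕ)
    [∀ m, Finite {a // f a = m}] [∀ m, Finite {b // g b = m}] :
    fiberSeries f * fiberSeries g = fiberSeries (fun p : A × B => f p.1 + g p.2) := by
  funext m
  let e : {p : A × B // f p.1 + g p.2 = m} ≃
      Σ q : antidiagonal m, {a // f a = q.1.1} × {b // g b = q.1.2} :=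
    { toFun := fun p => ⟨⟨(f p.1.1, g p.1.2), mem_antidiagonal.2 p.2⟩, ⟨p.1.1, rfl⟩, ⟨p.1.2, rfl⟩⟩
      invFun := fun x => ⟨(x.2.1.1, x.2.2.1), by
        rw [x.2.1.2, x.2.2.2]; exact mem_antidiagonal.1 x.1.2⟩
      left_inv := fun _ => rfl
      right_inv := by
        rintro ⟨⟨⟨q₁, q₂⟩, hq⟩, ⟨a, ha⟩, ⟨b, hb⟩⟩
        dsimp only at ha hb
        subst ha hb
        rfl }
  change MvPowerSeries.coeff m (fiberSeries f * fiberSeries g) = _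
  rw [MvPowerSeries.coeff_mul, ← Finset.sum_coe_sort]
  change _ = (Nat.card _ : ℚ)
  rw [Nat.card_congr e, Nat.card_sigma]
  push_cast [Nat.card_prod]
  rfl

end FiberSeries

lemma X_eq_fiberSeries {V : Type*} [Fintype V] (E : Multiset (Sym2 V)) (w : V → ℕ) :
    X E w = fiberSeries (fun κ : {κ : V → ℕ+ // Proper E κ} => mon w κ) :=
  funext fun _ => congrArg Nat.cast <| Nat.card_congr
    (Equiv.subtypeSubtypeEquivSubtypeInter _ _).symm

abbrev PathColouring (n : ℕ) : Type := {c : List ℕ+ // c.length = n ∧ c.IsChain (· ≠ ·)}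

/-- The monomial `∏ᵢ x_{cᵢ}^{γᵢ}` of the colouring `c` of the path with weights `γ`. -/
noncomputable def pathMonomial (γ : List ℕ) (c : List ℕ+) : ℕ+ →₀ ℕ :=
  (List.zipWith Finsupp.single c γ).sum

lemma pathMonomial_cons (γ : List ℕ) (c : List ℕ+) (a : ℕ) (x : ℕ+) :
    pathMonomial (a :: γ) (x :: c) = Finsupp.single x a + pathMonomial γ c := by
  simp [pathMonomial]

lemma pathMonomial_append {γ₁ γ₂ : List ℕ} {c₁ c₂ : List ℕ+} (h : c₁.length = γ₁.length) :
    pathMonomial (γ₁ ++ γ₂) (c₁ ++ c₂) = pathMonomial γ₁ c₁ + pathMonomial γ₂ c₂ := by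
  simp [pathMonomial, List.zipWith_append h]

lemma pathMonomial_ofFn (γ : List ℕ) (κ : Fin γ.length → ℕ+) :
    pathMonomial γ (List.ofFn κ) = mon (fun i => γ.get i) κ := by
  rw [pathMonomial, mon, ← List.sum_ofFn]
  congr 1
  apply List.ext_getElem <;> simp

lemma mem_support_pathMonomial {γ : List ℕ} {l : List ℕ+} (hl : l.length = γ.length)
    (hγ : ∀ a ∈ γ, 0 < a) {x : ℕ+} (hx : x ∈ l) : x ∈ (pathMonomial γ l).support := by
  obtain ⟨i, hi, rfl⟩ := List.getElem_of_mem hx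
  have hmem : Finsupp.single l[i] (γ[i]'(hl ▸ hi)) ∈ List.zipWith Finsupp.single l γ :=
    List.mem_iff_getElem.2 ⟨i, by simp [← hl, hi], List.getElem_zipWith⟩
  have hle := Finsupp.le_def.1 (List.le_sum_of_mem hmem) l[i]
  rw [Finsupp.single_eq_same] at hle
  exact Finsupp.mem_support_iff.2 (ne_of_gt (lt_of_lt_of_le (hγ _ (List.getElem_mem _)) hle))

lemma finite_pathMonomial_fiber {γ : List ℕ} {n : ℕ} (hγ : ∀ a ∈ γ, 0 < a)
    (hn : γ.length = n) (m : ℕ+ →₀ ℕ) :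
    Finite {c : PathColouring n // pathMonomial γ c.1 = m} := by
  let S : Set (List ℕ+) := {l | l.length = n ∧ ∀ x ∈ l, x ∈ m.support}
  have hS : S.Finite := by
    refine ((List.finite_length_eq m.support n).image (List.map Subtype.val)).subset ?_
    rintro l ⟨hl, hsupp⟩
    exact ⟨l.attachWith _ hsupp, by simpa using hl, by simp⟩
  have := hS.to_subtype
  refine Finite.of_injective (β := S) (fun c => ⟨c.1.1, c.1.2.1, fun x hx => ?_⟩) ?_
  · exact c.2 ▸ mem_support_pathMonomial (c.1.2.1.trans hn.symm) hγ hx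
  · intro c d h
    simp only [Subtype.mk.injEq] at h
    exact Subtype.ext (Subtype.ext h)

lemma Xwpath_eq_fiberSeries {γ : List ℕ} {n : ℕ} (hn : γ.length = n) :
    Xwpath γ = fiberSeries (fun c : PathColouring n => pathMonomial γ c.1) := by
  subst hn
  rw [Xwpath, X_eq_fiberSeries]
  refine fiberSeries_congr
    (((Equiv.vectorEquivFin ℕ+ _).symm.subtypeEquiv fun κ => ?_).trans
      (Equiv.subtypeSubtypeEquivSubtypeInter _ _)) fun κ => ?_
  · change _ ↔ (List.Vector.ofFn κ).toList.IsChain _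
    rw [List.Vector.toList_ofFn, proper_pathE_iff_isChain]
  · change pathMonomial γ (List.Vector.ofFn κ.1).toList = _
    rw [List.Vector.toList_ofFn, pathMonomial_ofFn]

lemma not_isChain_ne_append_iff {α : Type*} {l₁ l₂ : List α} (h₁ : l₁.IsChain (· ≠ ·))
    (h₂ : l₂.IsChain (· ≠ ·)) :
    ¬(l₁ ++ l₂).IsChain (· ≠ ·) ↔ ∃ x ∈ l₁.getLast?, x ∈ l₂.head? := by
  simp [List.isChain_append, h₁, h₂]

lemma exists_eq_append_singleton_cons {α : Type*} {l₁ l₂ : List α} {x : α}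
    (h₁ : x ∈ l₁.getLast?) (h₂ : x ∈ l₂.head?) : ∃ l l', l₁ = l ++ [x] ∧ l₂ = x :: l' :=
  ⟨_, _, (List.dropLast_append_getLast? x h₁).symm, (List.cons_head?_tail h₂).symm⟩

lemma isChain_append_tail {α : Type*} {R : α → α → Prop} {l₁ l₂ : List α} {x : α}
    (h₁ : x ∈ l₁.getLast?) (h₂ : x ∈ l₂.head?) :
    (l₁ ++ l₂.tail).IsChain R ↔ l₁.IsChain R ∧ l₂.IsChain R := by
  obtain ⟨l₁, l₂, rfl, rfl⟩ := exists_eq_append_singleton_cons h₁ h₂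
  simpa using List.isChain_split

namespace PathColouring

def appendEquiv (n k : ℕ) :
    {p : PathColouring n × PathColouring k // (p.1.1 ++ p.2.1).IsChain (· ≠ ·)} ≃
      PathColouring (n + k) where
  toFun p := ⟨p.1.1.1 ++ p.1.2.1, by simp [p.1.1.2.1, p.1.2.2.1], p.2⟩
  invFun c := ⟨(⟨c.1.take n, by simp [c.2.1], c.2.2.take n⟩,
    ⟨c.1.drop n, by simp [c.2.1], c.2.2.drop n⟩), by simpa using c.2.2⟩
  left_inv p := by
    obtain ⟨⟨⟨l₁, hl₁, -⟩, ⟨l₂, -, -⟩⟩, -⟩ := p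
    simp [List.take_left' hl₁, List.drop_left' hl₁]
  right_inv c := Subtype.ext (List.take_append_drop n c.1)

def glueEquiv (n k : ℕ) :
    {p : PathColouring (n + 1) × PathColouring (k + 1) // ¬(p.1.1 ++ p.2.1).IsChain (· ≠ ·)} ≃
      PathColouring (n + 1 + k) where
  toFun p := ⟨p.1.1.1 ++ p.1.2.1.tail, by simp [p.1.1.2.1, p.1.2.2.1], by
    obtain ⟨x, hx₁, hx₂⟩ := (not_isChain_ne_append_iff p.1.1.2.2 p.1.2.2.2).1 p.2
    exact (isChain_append_tail hx₁ hx₂).2 ⟨p.1.1.2.2, p.1.2.2.2⟩⟩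
  invFun c := ⟨(⟨c.1.take (n + 1), by simp [c.2.1], c.2.2.take _⟩,
    ⟨c.1.drop n, by simp [c.2.1]; omega, c.2.2.drop n⟩), by
      have hn : n < c.1.length := by rw [c.2.1]; omega
      refine (not_isChain_ne_append_iff (c.2.2.take _) (c.2.2.drop n)).2 ⟨c.1[n], ?_, ?_⟩ <;>
        simp [List.getLast?_take, List.head?_drop, hn]⟩
  left_inv p := by
    obtain ⟨⟨⟨l₁, hl₁, h₁⟩, ⟨l₂, hl₂, h₂⟩⟩, h⟩ := p
    obtain ⟨x, hx₁, hx₂⟩ := (not_isChain_ne_append_iff h₁ h₂).1 h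
    obtain ⟨l₁, l₂, rfl, rfl⟩ := exists_eq_append_singleton_cons hx₁ hx₂
    simp only [List.length_append, List.length_singleton, Nat.add_right_cancel_iff] at hl₁
    subst hl₁
    simp [List.take_append]
  right_inv c := Subtype.ext <| by simp [List.tail_drop]

def prodEquivSum (n k : ℕ) :
    PathColouring (n + 1) × PathColouring (k + 1) ≃
      PathColouring (n + 1 + (k + 1)) ⊕ PathColouring (n + 1 + k) :=
  (Equiv.sumCompl _).symm.trans ((appendEquiv _ _).sumCongr (glueEquiv n k))

end PathColouring

lemma pathMonomial_prodEquivSum {α β : List ℕ} {a b : ℕ}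
    (p : PathColouring (α.length + 1) × PathColouring (β.length + 1)) :
    Sum.elim (fun c => pathMonomial (α ++ [a] ++ b :: β) c.1)
        (fun c => pathMonomial (α ++ (a + b) :: β) c.1) (PathColouring.prodEquivSum _ _ p) =
      pathMonomial (α ++ [a]) p.1.1 + pathMonomial (b :: β) p.2.1 := by
  rw [PathColouring.prodEquivSum, Equiv.trans_apply]
  by_cases h : (p.1.1 ++ p.2.1).IsChain (· ≠ ·)
  · rw [Equiv.sumCompl_symm_apply_of_pos (p := fun q : PathColouring _ × PathColouring _ =>
      (q.1.1 ++ q.2.1).IsChain (· ≠ ·)) h]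
    exact pathMonomial_append (by simpa using p.1.2.1)
  · rw [Equiv.sumCompl_symm_apply_of_neg (p := fun q : PathColouring _ × PathColouring _ =>
      (q.1.1 ++ q.2.1).IsChain (· ≠ ·)) h]
    obtain ⟨⟨l₁, hl₁, h₁⟩, ⟨l₂, hl₂, h₂⟩⟩ := p
    obtain ⟨x, hx₁, hx₂⟩ := (not_isChain_ne_append_iff h₁ h₂).1 h
    obtain ⟨l₁, l₂, rfl, rfl⟩ := exists_eq_append_singleton_cons hx₁ hx₂
    simp only [List.length_append, List.length_singleton, Nat.add_right_cancel_iff] at hl₁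
    change pathMonomial _ (l₁ ++ [x] ++ l₂) = _
    rw [List.append_assoc, List.singleton_append, pathMonomial_append hl₁, pathMonomial_append hl₁,
      pathMonomial_cons, pathMonomial_cons, pathMonomial_cons, Finsupp.single_add]
    simp [pathMonomial, add_assoc]

lemma nconcat_append_singleton_cons (α : List ℕ) (a b : ℕ) (β : List ℕ) :
    nconcat (α ++ [a]) (b :: β) = α ++ (a + b) :: β := by
  induction α with
  | nil => rfl
  | cons c α ih =>
    cases α with
    | nil => rfl
    | cons d α => exact congrArg (c :: ·) ih

/-- **Multiplication rule for weighted paths.** For nonempty compositions `α`, `β`: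
`X_{(P_{ℓ(α)},α)} · X_{(P_{ℓ(β)},β)} = X_{(P_{ℓ(α·β)},α·β)} + X_{(P_{ℓ(α⊙β)},α⊙β)}`. -/
theorem weighted_path_multiplication
    (α β : List ℕ) (hα : α ≠ []) (hαpos : ∀ x ∈ α, 0 < x)
    (hβ : β ≠ []) (hβpos : ∀ x ∈ β, 0 < x) :
    Xwpath α * Xwpath β = Xwpath (α ++ β) + Xwpath (nconcat α β) := by
  obtain ⟨α, a, rfl⟩ := (List.eq_nil_or_concat' α).resolve_left hα
  obtain ⟨b, β, rfl⟩ := List.exists_cons_of_ne_nil hβ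
  rw [nconcat_append_singleton_cons]
  have hconcat : ∀ x ∈ α ++ [a] ++ b :: β, 0 < x := List.forall_mem_append.2 ⟨hαpos, hβpos⟩
  have hglued : ∀ x ∈ α ++ (a + b) :: β, 0 < x := by
    simp only [List.forall_mem_append, List.forall_mem_cons] at hαpos hβpos ⊢
    exact ⟨hαpos.1, Nat.add_pos_left hαpos.2.1 b, hβpos.2⟩
  have := finite_pathMonomial_fiber hαpos (n := α.length + 1) (by simp)
  have := finite_pathMonomial_fiber hβpos (n := β.length + 1) (by simp)
  have := finite_pathMonomial_fiber hconcat (n := α.length + 1 + (β.length + 1)) (by simp; omega)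
  have := finite_pathMonomial_fiber hglued (n := α.length + 1 + β.length) (by simp; omega)
  rw [Xwpath_eq_fiberSeries (n := α.length + 1) (by simp),
    Xwpath_eq_fiberSeries (n := β.length + 1) (by simp),
    Xwpath_eq_fiberSeries (n := α.length + 1 + (β.length + 1)) (by simp; omega),
    Xwpath_eq_fiberSeries (n := α.length + 1 + β.length) (by simp; omega),
    fiberSeries_mul, ← fiberSeries_sumElim]
  exact fiberSeries_congr _ pathMonomial_prodEquivSum

end CSF
end
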